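/- For any letter x and word u over {a,b}: ψ(xu) = μ_x(ψ(u)) x. -/

import Mathlib

/-
Induction on u from the right: appending a letter y reduces the claim to
(μ_x(p) x y)⁺ = μ_x((p y)⁺) x for every word p, where w⁺ appends to w the reverse of the prefix
preceding its longest palindromic suffix. For y = x the word is ν(p x) with ν(w) = μ_x(w) x; for
y ≠ x it is μ_x(p y), whose nonempty palindromic suffixes all have the form y μ_x(v). Every suffix
of μ_x(w) starts at a block boundary, and ν and v ↦ y μ_x(v) preserve and reflect palindromes
(by μ_x(rev w) x = x rev(μ_x(w)) and injectivity of μ_x). Hence the longest palindromic suffix of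
p y is sent to the longest palindromic suffix of the image, and the same identity turns the closure
of the image into the image of (p y)⁺.
-/

def palClosure (w : List Bool) : List Bool :=
  let k := Nat.find (p := fun k => (w.drop k).reverse = w.drop k)
    ⟨w.length, by simp⟩
  w.take k ++ w.drop k ++ (w.take k).reverse

def psi (v : List Bool) : List Bool := v.foldl (fun w x => palClosure (w ++ [x])) []

def E (v : List Bool) : List Bool := v.map (!·)

def mu (x : Bool) (w : List Bool) : List Bool := w.flatMap (fun y => if y = x then [x] else [x, y])

def muW : List Bool → List Bool → List Bool
  | [], w => w
  | x :: v, w => mu x (muW v w)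

def vN (n : ℕ) : List Bool := (List.range n).map (fun i => decide (i % 2 = 1))

def fibF : ℕ → ℕ
  | 0 => 1
  | 1 => 1
  | n + 2 => fibF (n + 1) + fibF n

def HasPeriod (w : List Bool) (p : ℕ) : Prop :=
  0 < p ∧ ∀ i j (hi : i < w.length) (hj : j < w.length),
    i % p = j % p → w.get ⟨i, hi⟩ = w.get ⟨j, hj⟩

noncomputable def minPeriod (w : List Bool) : ℕ := sInf {p | HasPeriod w p}

def dOp : List Bool → List Bool
  | x :: y :: u => y :: x :: u
  | w => w

def cOp (v : List Bool) : List Bool := (dOp v.reverse).reverse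

def contAux : List ℕ → ℕ
  | [] => 1
  | [a] => a
  | a :: b :: t => a * contAux (b :: t) + contAux t

lemma reverse_cons_append_singleton_eq_iff {α : Type*} {a b : α} {l : List α} :
    (a :: (l ++ [b])).reverse = a :: (l ++ [b]) ↔ a = b ∧ l.reverse = l := by
  simp [eq_comm (a := b), and_comm]

lemma exists_cons_of_reverse_eq {α : Type*} {l t : List α} {b : α} (hpal : l.reverse = l)
    (hl : l = t ++ [b]) : ∃ r, l = b :: r :=
  ⟨t.reverse, by rw [← hpal, hl, List.reverse_concat]⟩

lemma palClosure_append_of_forall_isSuffix {a s : List Bool} (hs : s.reverse = s)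
    (hmax : ∀ t, t <:+ a ++ s → t.reverse = t → t <:+ s) :
    palClosure (a ++ s) = a ++ s ++ a.reverse := by
  have hfind : Nat.find (p := fun k => ((a ++ s).drop k).reverse = (a ++ s).drop k)
      ⟨(a ++ s).length, by simp⟩ = a.length := by
    refine (Nat.find_eq_iff _).2 ⟨by simpa using hs, fun j hj hpal => ?_⟩
    have := (hmax _ (List.drop_suffix j _) hpal).length_le
    simp only [List.length_drop, List.length_append] at this
    omega
  simp only [palClosure, hfind, List.take_left, List.drop_left]

lemma palClosure_of_reverse_eq {w : List Bool} (hw : w.reverse = w) : palClosure w = w := by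
  simpa using palClosure_append_of_forall_isSuffix (a := []) hw (fun _ ht _ => ht)

lemma exists_append_forall_isSuffix (w : List Bool) :
    ∃ a s, w = a ++ s ∧ s.reverse = s ∧ ∀ t, t <:+ w → t.reverse = t → t <:+ s := by
  have hex : ∃ k, (w.drop k).reverse = w.drop k := ⟨w.length, by simp⟩
  refine ⟨w.take (Nat.find hex), w.drop (Nat.find hex), (List.take_append_drop _ _).symm,
    Nat.find_spec hex, fun t ht hpal => ?_⟩
  have hk : Nat.find hex ≤ w.length - t.length :=
    Nat.find_min' hex (by rwa [← List.suffix_iff_eq_drop.1 ht])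
  refine List.suffix_of_suffix_length_le ht (List.drop_suffix _ _) ?_
  rw [List.length_drop]
  have := ht.length_le
  omega

section mu

variable (x : Bool)

lemma mu_nil : mu x [] = [] := rfl

lemma mu_cons (z : Bool) (w : List Bool) :
    mu x (z :: w) = x :: (if z = x then mu x w else z :: mu x w) := by
  by_cases h : z = x <;> simp [mu, h]

lemma mu_append (v w : List Bool) : mu x (v ++ w) = mu x v ++ mu x w :=
  List.flatMap_append

lemma mu_ne_not_cons (w v : List Bool) : mu x w ≠ (!x) :: v := by
  cases w with
  | nil => simp [mu_nil]
  | cons z w => rw [mu_cons]; cases x <;> simp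

lemma mu_injective : Function.Injective (mu x) := by
  intro a
  induction a with
  | nil =>
    rintro (_ | ⟨w, b⟩) h
    · rfl
    · simp [mu_nil, mu_cons] at h
  | cons z a ih =>
    rintro (_ | ⟨w, b⟩) h
    · simp [mu_nil, mu_cons] at h
    · rw [mu_cons, mu_cons, List.cons.injEq] at h
      cases x <;> cases z <;> cases w <;>
        simp only [Bool.true_eq_false, Bool.false_eq_true, ↓reduceIte, true_and, false_and,
          List.cons.injEq] at h ⊢
      all_goals first
        | exact ih h
        | exact mu_ne_not_cons _ _ _ h
        | exact mu_ne_not_cons _ _ _ h.symm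

lemma mu_reverse_append_singleton (p : List Bool) :
    mu x p.reverse ++ [x] = x :: (mu x p).reverse := by
  induction p with
  | nil => rfl
  | cons z p ih =>
    have hz : mu x [z] ++ [x] = x :: (mu x [z]).reverse := by
      by_cases hz : z = x <;> simp [mu, hz]
    calc mu x (z :: p).reverse ++ [x] = (mu x p.reverse ++ [x]) ++ (mu x [z]).reverse := by
          rw [List.reverse_cons, mu_append, List.append_assoc, hz, List.append_cons]
      _ = x :: (mu x (z :: p)).reverse := by
          rw [ih, show z :: p = [z] ++ p from rfl, mu_append, List.reverse_append,
            List.cons_append]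

lemma mu_append_singleton_reverse_eq_iff (p : List Bool) :
    (mu x p ++ [x]).reverse = mu x p ++ [x] ↔ p.reverse = p := by
  rw [List.reverse_append, List.reverse_singleton, List.singleton_append,
    ← mu_reverse_append_singleton, List.append_left_inj, (mu_injective x).eq_iff]

lemma not_cons_mu_reverse_eq_iff (v : List Bool) :
    ((!x) :: mu x v).reverse = (!x) :: mu x v ↔ ((!x) :: v).reverse = (!x) :: v := by
  induction v using List.reverseRecOn with
  | nil => simp [mu_nil]
  | append_singleton v z =>
    rw [reverse_cons_append_singleton_eq_iff, mu_append]
    by_cases hz : z = x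
    · subst hz
      simp [mu]
    · obtain rfl := Bool.eq_not.mpr hz
      rw [show mu x [!x] = [x] ++ [!x] by simp [mu], ← List.append_assoc,
        reverse_cons_append_singleton_eq_iff, mu_append_singleton_reverse_eq_iff]

lemma exists_of_isSuffix_mu {t q : List Bool} (h : t <:+ mu x q) :
    (∃ v, v <:+ q ∧ t = mu x v) ∨ ∃ v, (!x) :: v <:+ q ∧ t = (!x) :: mu x v := by
  induction q with
  | nil => exact .inl ⟨[], List.nil_suffix, List.eq_nil_of_suffix_nil h⟩
  | cons z q ih =>
    have lift : ∀ {v}, v <:+ q → v <:+ z :: q := fun hv => hv.trans (List.suffix_cons _ _)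
    rw [mu_cons] at h
    rcases List.suffix_cons_iff.1 h with rfl | h
    · exact .inl ⟨z :: q, List.suffix_refl _, (mu_cons x z q).symm⟩
    by_cases hz : z = x
    · rw [if_pos hz] at h
      rcases ih h with ⟨v, hv, rfl⟩ | ⟨v, hv, rfl⟩
      exacts [.inl ⟨v, lift hv, rfl⟩, .inr ⟨v, lift hv, rfl⟩]
    · obtain rfl := Bool.eq_not.mpr hz
      rw [if_neg hz] at h
      rcases List.suffix_cons_iff.1 h with rfl | h
      · exact .inr ⟨q, List.suffix_refl _, rfl⟩
      rcases ih h with ⟨v, hv, rfl⟩ | ⟨v, hv, rfl⟩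
      exacts [.inl ⟨v, lift hv, rfl⟩, .inr ⟨v, lift hv, rfl⟩]

lemma exists_of_isSuffix_mu_append_singleton {t w : List Bool} (ht : t <:+ mu x w ++ [x])
    (hpal : t.reverse = t) : t = [] ∨ ∃ v, v <:+ w ∧ v.reverse = v ∧ t = mu x v ++ [x] := by
  rcases List.suffix_concat_iff.1 ht with rfl | ⟨t', rfl, ht'⟩
  · exact .inl rfl
  rcases exists_of_isSuffix_mu x ht' with ⟨v, hv, rfl⟩ | ⟨v, -, rfl⟩
  · exact .inr ⟨v, hv, (mu_append_singleton_reverse_eq_iff x v).1 hpal, rfl⟩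
  · rw [List.cons_append, reverse_cons_append_singleton_eq_iff] at hpal
    cases x <;> simp at hpal

lemma exists_of_isSuffix_mu_append_not {t w : List Bool} (ht : t <:+ mu x (w ++ [!x]))
    (hpal : t.reverse = t) :
    t = [] ∨ ∃ v, (!x) :: v <:+ w ++ [!x] ∧ ((!x) :: v).reverse = (!x) :: v ∧
      t = (!x) :: mu x v := by
  rcases exists_of_isSuffix_mu x ht with ⟨v, hv, rfl⟩ | ⟨v, hv, rfl⟩
  · rcases List.suffix_concat_iff.1 hv with rfl | ⟨v, rfl, -⟩
    · exact .inl rfl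
    obtain ⟨r, hr⟩ :=
      exists_cons_of_reverse_eq (t := mu x v ++ [x]) (b := !x) hpal (by simp [mu])
    exact absurd hr (mu_ne_not_cons x _ r)
  · exact .inr ⟨v, hv, (not_cons_mu_reverse_eq_iff x v).1 hpal, rfl⟩

lemma palClosure_mu_append_singleton (q : List Bool) :
    palClosure (mu x q ++ [x]) = mu x (palClosure q) ++ [x] := by
  obtain ⟨a, s, rfl, hs, hmax⟩ := exists_append_forall_isSuffix q
  have hsplit : mu x (a ++ s) ++ [x] = mu x a ++ (mu x s ++ [x]) := by
    rw [mu_append, List.append_assoc]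
  rw [palClosure_append_of_forall_isSuffix hs hmax, hsplit,
    palClosure_append_of_forall_isSuffix ((mu_append_singleton_reverse_eq_iff x s).2 hs)]
  · rw [mu_append, mu_append, List.append_assoc _ _ [x], mu_reverse_append_singleton]
    simp
  · intro t ht hpal
    rw [← hsplit] at ht
    rcases exists_of_isSuffix_mu_append_singleton x ht hpal with rfl | ⟨v, hv, hvpal, rfl⟩
    · exact List.nil_suffix
    · exact List.suffix_append_self_iff.2 ((hmax v hv hvpal).flatMap _)

lemma palClosure_mu_append_not (p : List Bool) :
    palClosure (mu x (p ++ [!x])) = mu x (palClosure (p ++ [!x])) ++ [x] := by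
  obtain ⟨a, s, hq, hs, hmax⟩ := exists_append_forall_isSuffix (p ++ [!x])
  obtain ⟨v, rfl⟩ : ∃ v, s = (!x) :: v := by
    obtain ⟨c, hc⟩ := hmax [!x] (List.suffix_append _ _) rfl
    exact exists_cons_of_reverse_eq hs hc.symm
  have hsplit : mu x (a ++ (!x) :: v) = (mu x a ++ [x]) ++ (!x) :: mu x v := by
    simp [mu_append, mu_cons]
  rw [hq] at hmax ⊢
  rw [palClosure_append_of_forall_isSuffix hs hmax, hsplit,
    palClosure_append_of_forall_isSuffix ((not_cons_mu_reverse_eq_iff x v).2 hs)]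
  · rw [mu_append, mu_append, List.append_assoc _ _ [x], mu_reverse_append_singleton]
    simp [mu_cons]
  · intro t ht hpal
    rw [← hsplit, ← hq] at ht
    rcases exists_of_isSuffix_mu_append_not x ht hpal with rfl | ⟨v', hv', hv'pal, rfl⟩
    · exact List.nil_suffix
    rw [hq] at hv'
    rcases List.suffix_cons_iff.1 (hmax _ hv' hv'pal) with h | h
    · obtain ⟨-, rfl⟩ := List.cons.inj h
      exact List.suffix_refl _
    · have hmu : mu x ((!x) :: v') <:+ mu x v := h.flatMap _
      rw [mu_cons, if_neg (by cases x <;> simp)] at hmu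
      exact ((List.suffix_cons _ _).trans hmu).trans (List.suffix_cons _ _)

lemma palClosure_mu_append_singleton_append_singleton (y : Bool) (p : List Bool) :
    palClosure (mu x p ++ [x] ++ [y]) = mu x (palClosure (p ++ [y])) ++ [x] := by
  by_cases hy : y = x
  · subst hy
    rw [← palClosure_mu_append_singleton, mu_append]
    simp [mu]
  · obtain rfl := Bool.eq_not.mpr hy
    rw [← palClosure_mu_append_not, mu_append]
    simp [mu]

end mu

lemma psi_append_singleton (v : List Bool) (y : Bool) :
    psi (v ++ [y]) = palClosure (psi v ++ [y]) := by
  simp [psi, List.foldl_append]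

theorem stmt7 (x : Bool) (u : List Bool) : psi (x :: u) = mu x (psi u) ++ [x] := by
  induction u using List.reverseRecOn with
  | nil => simpa [psi, mu] using palClosure_of_reverse_eq (w := [x]) rfl
  | append_singleton u y ih =>
    rw [← List.cons_append, psi_append_singleton, ih, psi_append_singleton,
      palClosure_mu_append_singleton_append_singleton]
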